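/- The central elements x and z of E are algebraically independent over K: the K-algebra homomorphism from the polynomial ring K[X,Y] to E sending X to x and Y to z is injective, so the K-subalgebra of E generated by x and z is isomorphic to a polynomial ring in two variables over K. -/

import Mathlib

open FreeAlgebra

inductive Gen : Type | e1 | e2 | ep | eb | al | ab

variable (K : Type) [Field K]

/-- Relations presenting the preprojective algebra `E = KQ/⟨ε²+αᾱ, ε̄²+ᾱα⟩` of type `T̃₂`,
the Ext algebra of the tame Hecke algebra `A`. -/
inductive RelE : FreeAlgebra K Gen → FreeAlgebra K Gen → Prop
  | sum : RelE (ι K .e1 + ι K .e2) 1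
  | idem1 : RelE (ι K .e1 * ι K .e1) (ι K .e1)
  | idem2 : RelE (ι K .e2 * ι K .e2) (ι K .e2)
  | orth12 : RelE (ι K .e1 * ι K .e2) 0
  | orth21 : RelE (ι K .e2 * ι K .e1) 0
  | ep_l : RelE (ι K .e1 * ι K .ep) (ι K .ep)
  | ep_r : RelE (ι K .ep * ι K .e1) (ι K .ep)
  | eb_l : RelE (ι K .e2 * ι K .eb) (ι K .eb)
  | eb_r : RelE (ι K .eb * ι K .e2) (ι K .eb)
  | al_l : RelE (ι K .e1 * ι K .al) (ι K .al)
  | al_r : RelE (ι K .al * ι K .e2) (ι K .al)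
  | ab_l : RelE (ι K .e2 * ι K .ab) (ι K .ab)
  | ab_r : RelE (ι K .ab * ι K .e1) (ι K .ab)
  | rel1 : RelE (ι K .ep * ι K .ep + ι K .al * ι K .ab) 0
  | rel2 : RelE (ι K .eb * ι K .eb + ι K .ab * ι K .al) 0

/-- The preprojective algebra of type `T̃₂`. -/
abbrev PreprojE : Type := RingQuot (RelE K)

namespace PreprojE

noncomputable def of (g : Gen) : PreprojE K := RingQuot.mkAlgHom K (RelE K) (ι K g)

noncomputable abbrev e₁ : PreprojE K := of K .e1
noncomputable abbrev e₂ : PreprojE K := of K .e2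
noncomputable abbrev ε : PreprojE K := of K .ep
noncomputable abbrev εb : PreprojE K := of K .eb
noncomputable abbrev α : PreprojE K := of K .al
noncomputable abbrev αb : PreprojE K := of K .ab

/-- The central element `x = ε² + ε̄²`. -/
noncomputable def x : PreprojE K := ε K ^ 2 + εb K ^ 2

/-- The central element `z = εαε̄ᾱ + αε̄ᾱε + ε̄ᾱεα + ᾱεαε̄`. -/
noncomputable def z : PreprojE K :=
  ε K * α K * εb K * αb K + α K * εb K * αb K * ε K +
    εb K * αb K * ε K * α K + αb K * ε K * α K * εb K

/-- The 16-element generating set `S`. -/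
noncomputable def S : Set (PreprojE K) :=
  {e₁ K, e₂ K, ε K, α K, εb K, αb K, ε K * α K, εb K * αb K, α K * εb K, αb K * ε K,
    ε K * α K * εb K, εb K * αb K * ε K, αb K * ε K * α K, α K * εb K * αb K,
    ε K * α K * εb K * αb K, εb K * αb K * ε K * α K}

end PreprojE

/-!
Over `K[a, c]` (`a = X 0`, `c = X 1` below), sending `e₁, e₂` to the two block idempotents and,
in `2 × 2` blocks over the two vertices, `ε ↦ [0 1; a² 0]`, `ε̄ ↦ [a 0; -c -a]`, `α ↦ 1`,
`ᾱ ↦ -a²` respects the preprojective relations, and in this representation `x` and `z` act as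
the scalars `a²` and `a²c`. Their exponent vectors `(2, 0)` and `(2, 1)` are linearly independent,
so distinct monomials in `x, z` go to distinct monomials in `a, c`. Since `x` is central,
evaluation at `(x, z)` is an algebra map `K[X, Y] → E`, and it is therefore injective.
-/

theorem mul_eq_zero_of_mul_eq_zero_of_absorbs {R : Type*} [SemigroupWithZero R]
    {u v p q : R} (hu : u * p = u) (hpq : p * q = 0) (hv : q * v = v) : u * v = 0 := by
  rw [← hu, ← hv, mul_assoc, ← mul_assoc p, hpq, zero_mul, mul_zero]

theorem commute_mul_add_mul_self_of_mul_self_eq_zero {R : Type*} [NonUnitalRing R] {a : R}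
    (b : R) (ha : a * a = 0) : Commute (a * b + b * a) a := by
  simp only [Commute, SemiconjBy, add_mul, mul_add, mul_assoc, ha, mul_zero, ← mul_assoc a a,
    zero_mul, add_zero, zero_add]

namespace MvPolynomial

section AevalOfCommute

variable {R A ι : Type*} [CommSemiring R] [Semiring A] [Algebra R A] {v : ι → A}

open scoped IsMulCommutative in
noncomputable def aevalOfCommute (hv : ∀ i j, Commute (v i) (v j)) :
    MvPolynomial ι R →ₐ[R] A :=
  haveI := Algebra.isMulCommutative_adjoin R (s := Set.range v)
    (by rintro _ ⟨i, rfl⟩ _ ⟨j, rfl⟩; exact hv i j)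
  (Algebra.adjoin R (Set.range v)).val.comp
    (aeval fun i => ⟨v i, Algebra.subset_adjoin ⟨i, rfl⟩⟩)

theorem aevalOfCommute_X (hv : ∀ i j, Commute (v i) (v j)) (i : ι) :
    aevalOfCommute (R := R) hv (X i) = v i := by
  simp [aevalOfCommute]

theorem range_aevalOfCommute (hv : ∀ i j, Commute (v i) (v j)) :
    (aevalOfCommute (R := R) hv).range = Algebra.adjoin R (Set.range v) := by
  refine le_antisymm ?_ (Algebra.adjoin_le ?_)
  · rintro _ ⟨p, rfl⟩
    exact Subtype.prop _
  · rintro _ ⟨i, rfl⟩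
    exact ⟨X i, aevalOfCommute_X hv i⟩

end AevalOfCommute

section MonomialSubstitution

variable {R σ τ : Type*} [CommSemiring R]

theorem aeval_monomial_one_eq_mapDomainAlgHom (v : σ → τ →₀ ℕ) :
    aeval (fun i => monomial (v i) (1 : R)) =
      AddMonoidAlgebra.mapDomainAlgHom R R (Finsupp.linearCombination ℕ v).toAddMonoidHom := by
  refine algHom_ext fun i => ?_
  rw [aeval_X]
  simp [X, monomial, AddMonoidAlgebra.mapDomain_single]

theorem aeval_monomial_one_injective {v : σ → τ →₀ ℕ}
    (hv : Function.Injective (Finsupp.linearCombination ℕ v)) :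
    Function.Injective (aeval (R := R) fun i => monomial (v i) (1 : R)) := by
  rw [aeval_monomial_one_eq_mapDomainAlgHom]
  exact AddMonoidAlgebra.mapDomain_injective hv

theorem aeval_X_zero_sq_X_zero_sq_mul_X_one_injective :
    Function.Injective (aeval ![X 0 ^ 2, X 0 ^ 2 * X 1] :
      MvPolynomial (Fin 2) R → MvPolynomial (Fin 2) R) := by
  have hv : Function.Injective (Finsupp.linearCombination ℕ
      ![Finsupp.single (0 : Fin 2) 2, Finsupp.single 0 2 + Finsupp.single 1 1]) := by
    intro s t h
    have h0 := DFunLike.congr_fun h 0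
    have h1 := DFunLike.congr_fun h 1
    ext i
    fin_cases i <;> simp [Finsupp.linearCombination_apply, Finsupp.sum_fintype] at h0 h1 ⊢ <;> omega
  convert aeval_monomial_one_injective (R := R) hv using 3
  ext1 i
  fin_cases i
  · exact X_pow_eq_monomial
  · exact (monomial_single_add (s := Finsupp.single 1 1)).symm

end MonomialSubstitution

end MvPolynomial

namespace PreprojE

theorem e₁_add_e₂ : e₁ K + e₂ K = 1 := by
  have h := RingQuot.mkAlgHom_rel K (RelE.sum (K := K)); rwa [map_add, map_one] at h

theorem e₁_mul_e₂ : e₁ K * e₂ K = 0 := by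
  have h := RingQuot.mkAlgHom_rel K (RelE.orth12 (K := K)); rwa [map_mul, map_zero] at h

theorem e₂_mul_e₁ : e₂ K * e₁ K = 0 := by
  have h := RingQuot.mkAlgHom_rel K (RelE.orth21 (K := K)); rwa [map_mul, map_zero] at h

theorem e₁_mul_ε : e₁ K * ε K = ε K := by
  have h := RingQuot.mkAlgHom_rel K (RelE.ep_l (K := K)); rwa [map_mul] at h

theorem ε_mul_e₁ : ε K * e₁ K = ε K := by
  have h := RingQuot.mkAlgHom_rel K (RelE.ep_r (K := K)); rwa [map_mul] at h

theorem e₂_mul_εb : e₂ K * εb K = εb K := by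
  have h := RingQuot.mkAlgHom_rel K (RelE.eb_l (K := K)); rwa [map_mul] at h

theorem εb_mul_e₂ : εb K * e₂ K = εb K := by
  have h := RingQuot.mkAlgHom_rel K (RelE.eb_r (K := K)); rwa [map_mul] at h

theorem e₁_mul_α : e₁ K * α K = α K := by
  have h := RingQuot.mkAlgHom_rel K (RelE.al_l (K := K)); rwa [map_mul] at h

theorem α_mul_e₂ : α K * e₂ K = α K := by
  have h := RingQuot.mkAlgHom_rel K (RelE.al_r (K := K)); rwa [map_mul] at h

theorem e₂_mul_αb : e₂ K * αb K = αb K := by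
  have h := RingQuot.mkAlgHom_rel K (RelE.ab_l (K := K)); rwa [map_mul] at h

theorem αb_mul_e₁ : αb K * e₁ K = αb K := by
  have h := RingQuot.mkAlgHom_rel K (RelE.ab_r (K := K)); rwa [map_mul] at h

theorem ε_mul_ε_add_α_mul_αb : ε K * ε K + α K * αb K = 0 := by
  have h := RingQuot.mkAlgHom_rel K (RelE.rel1 (K := K))
  rwa [map_add, map_mul, map_mul, map_zero] at h

theorem εb_mul_εb_add_αb_mul_α : εb K * εb K + αb K * α K = 0 := by
  have h := RingQuot.mkAlgHom_rel K (RelE.rel2 (K := K))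
  rwa [map_add, map_mul, map_mul, map_zero] at h

theorem e₁_mul_e₁ : e₁ K * e₁ K = e₁ K := by
  have h := RingQuot.mkAlgHom_rel K (RelE.idem1 (K := K)); rwa [map_mul] at h

theorem e₁_mul_εb : e₁ K * εb K = 0 :=
  mul_eq_zero_of_mul_eq_zero_of_absorbs (e₁_mul_e₁ K) (e₁_mul_e₂ K) (e₂_mul_εb K)

theorem εb_mul_e₁ : εb K * e₁ K = 0 :=
  mul_eq_zero_of_mul_eq_zero_of_absorbs (εb_mul_e₂ K) (e₂_mul_e₁ K) (e₁_mul_e₁ K)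

theorem ε_mul_εb : ε K * εb K = 0 :=
  mul_eq_zero_of_mul_eq_zero_of_absorbs (ε_mul_e₁ K) (e₁_mul_e₂ K) (e₂_mul_εb K)

theorem εb_mul_ε : εb K * ε K = 0 :=
  mul_eq_zero_of_mul_eq_zero_of_absorbs (εb_mul_e₂ K) (e₂_mul_e₁ K) (e₁_mul_ε K)

theorem α_mul_α : α K * α K = 0 :=
  mul_eq_zero_of_mul_eq_zero_of_absorbs (α_mul_e₂ K) (e₂_mul_e₁ K) (e₁_mul_α K)

theorem αb_mul_αb : αb K * αb K = 0 :=
  mul_eq_zero_of_mul_eq_zero_of_absorbs (αb_mul_e₁ K) (e₁_mul_e₂ K) (e₂_mul_αb K)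

theorem x_eq : x K = ε K * ε K + εb K * εb K := by
  rw [x, sq, sq]

theorem x_eq_neg : x K = -(α K * αb K + αb K * α K) := by
  rw [x_eq, eq_neg_of_add_eq_zero_left (ε_mul_ε_add_α_mul_αb K),
    eq_neg_of_add_eq_zero_left (εb_mul_εb_add_αb_mul_α K), neg_add]

theorem commute_x_of_commute {a : PreprojE K} (hε : Commute (ε K) a) (hεb : Commute (εb K) a) :
    Commute (x K) a :=
  x_eq K ▸ (hε.mul_left hε).add_left (hεb.mul_left hεb)

theorem commute_x_of (g : Gen) : Commute (x K) (of K g) := by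
  have hεe₁ : Commute (ε K) (e₁ K) := (ε_mul_e₁ K).trans (e₁_mul_ε K).symm
  have hεbe₁ : Commute (εb K) (e₁ K) := (εb_mul_e₁ K).trans (e₁_mul_εb K).symm
  have hεεb : Commute (ε K) (εb K) := (ε_mul_εb K).trans (εb_mul_ε K).symm
  cases g
  case e1 => exact commute_x_of_commute K hεe₁ hεbe₁
  case e2 =>
    rw [show of K .e2 = 1 - e₁ K from eq_sub_of_add_eq' (e₁_add_e₂ K)]
    exact (Commute.one_right _).sub_right (commute_x_of_commute K hεe₁ hεbe₁)
  case ep => exact commute_x_of_commute K (Commute.refl _) hεεb.symm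
  case eb => exact commute_x_of_commute K hεεb (Commute.refl _)
  case al =>
    rw [x_eq_neg]
    exact (commute_mul_add_mul_self_of_mul_self_eq_zero _ (α_mul_α K)).neg_left
  case ab =>
    rw [x_eq_neg, add_comm]
    exact (commute_mul_add_mul_self_of_mul_self_eq_zero _ (αb_mul_αb K)).neg_left

theorem commute_of_forall_commute_of {y : PreprojE K} (h : ∀ g, Commute y (of K g))
    (w : PreprojE K) : Commute y w := by
  obtain ⟨u, rfl⟩ := RingQuot.mkAlgHom_surjective K (RelE K) w
  induction u using FreeAlgebra.induction with
  | grade0 r => rw [AlgHom.commutes]; exact Algebra.commute_algebraMap_right r y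
  | grade1 g => exact h g
  | mul a b ha hb => rw [map_mul]; exact ha.mul_right hb
  | add a b ha hb => rw [map_add]; exact ha.add_right hb

theorem commute_x (w : PreprojE K) : Commute (x K) w :=
  commute_of_forall_commute_of K (commute_x_of K) w

section Representation

open Matrix MvPolynomial

noncomputable def repGen : Gen → Matrix (Fin 2 ⊕ Fin 2) (Fin 2 ⊕ Fin 2) (MvPolynomial (Fin 2) K)
  | .e1 => fromBlocks 1 0 0 0
  | .e2 => fromBlocks 0 0 0 1
  | .ep => fromBlocks !![0, 1; X 0 ^ 2, 0] 0 0 0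
  | .eb => fromBlocks 0 0 0 !![X 0, 0; -X 1, -X 0]
  | .al => fromBlocks 0 1 0 0
  | .ab => fromBlocks 0 0 !![-X 0 ^ 2, 0; 0, -X 0 ^ 2] 0

theorem lift_repGen_eq_of_relE {u v : FreeAlgebra K Gen} (h : RelE K u v) :
    FreeAlgebra.lift K (repGen K) u = FreeAlgebra.lift K (repGen K) v := by
  induction h <;>
    simp [repGen, fromBlocks_multiply, fromBlocks_add, ← fromBlocks_one, ← fromBlocks_zero]
  all_goals exact Matrix.ext fun i j => by fin_cases i <;> fin_cases j <;> simp <;> ring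

noncomputable def rep :
    PreprojE K →ₐ[K] Matrix (Fin 2 ⊕ Fin 2) (Fin 2 ⊕ Fin 2) (MvPolynomial (Fin 2) K) :=
  RingQuot.liftAlgHom K ⟨FreeAlgebra.lift K (repGen K), fun _ _ h => lift_repGen_eq_of_relE K h⟩

theorem rep_of (g : Gen) : rep K (of K g) = repGen K g := by
  rw [of, rep, RingQuot.liftAlgHom_mkAlgHom_apply, FreeAlgebra.lift_ι_apply]

theorem rep_x : rep K (x K) = scalar _ (X 0 ^ 2) := by
  simp only [x, sq, map_add, map_mul, rep_of, repGen, fromBlocks_multiply]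
  refine Matrix.ext fun i j => ?_
  rcases i with i | i <;> rcases j with j | j <;> fin_cases i <;> fin_cases j <;> simp [mul_comm]

theorem rep_z : rep K (z K) = scalar _ (X 0 ^ 2 * X 1) := by
  simp only [z, map_add, map_mul, rep_of, repGen, fromBlocks_multiply]
  refine Matrix.ext fun i j => ?_
  rcases i with i | i <;> rcases j with j | j <;> fin_cases i <;> fin_cases j <;> simp <;> ring

end Representation

end PreprojE

open PreprojE in
theorem x_z_algebraically_independent_general (K : Type) [Field K] :
    (∃ f : MvPolynomial (Fin 2) K →ₐ[K] PreprojE K,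
      f (MvPolynomial.X 0) = x K ∧ f (MvPolynomial.X 1) = z K ∧ Function.Injective f) ∧
    Nonempty (MvPolynomial (Fin 2) K ≃ₐ[K]
      Algebra.adjoin K ({x K, z K} : Set (PreprojE K))) := by
  have hxz : ∀ i j, Commute (![x K, z K] i) (![x K, z K] j) := by
    intro i j
    fin_cases i <;> fin_cases j
    exacts [Commute.refl _, commute_x K _, (commute_x K _).symm, Commute.refl _]
  let f := MvPolynomial.aevalOfCommute (R := K) hxz
  have hrep : (rep K).comp f = (Matrix.scalarAlgHom _ K).comp
      (MvPolynomial.aeval ![MvPolynomial.X 0 ^ 2, MvPolynomial.X 0 ^ 2 * MvPolynomial.X 1]) := by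
    refine MvPolynomial.algHom_ext fun i => ?_
    fin_cases i
    · simpa [f, MvPolynomial.aevalOfCommute_X] using rep_x K
    · simpa [f, MvPolynomial.aevalOfCommute_X] using rep_z K
  have hf : Function.Injective f := by
    refine Function.Injective.of_comp (f := rep K) ?_
    rw [← AlgHom.coe_comp, hrep, AlgHom.coe_comp]
    exact Function.Injective.comp (fun _ _ h => Matrix.scalar_inj.mp h)
      MvPolynomial.aeval_X_zero_sq_X_zero_sq_mul_X_one_injective
  refine ⟨⟨f, MvPolynomial.aevalOfCommute_X hxz 0, MvPolynomial.aevalOfCommute_X hxz 1, hf⟩,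
    ⟨(AlgEquiv.ofInjective f hf).trans (Subalgebra.equivOfEq _ _ ?_)⟩⟩
  rw [MvPolynomial.range_aevalOfCommute, Matrix.range_cons_cons_empty]

open PreprojE in
/-- `x` and `z` are algebraically independent over `K`: the `K`-algebra homomorphism
`K[X,Y] → E`, `X ↦ x`, `Y ↦ z`, is injective; consequently the subalgebra generated by
`x` and `z` is isomorphic to a polynomial ring in two variables over `K`. -/
theorem x_z_algebraically_independent (K : Type) [Field K] [IsAlgClosed K] :
    (∃ f : MvPolynomial (Fin 2) K →ₐ[K] PreprojE K,
      f (MvPolynomial.X 0) = x K ∧ f (MvPolynomial.X 1) = z K ∧ Function.Injective f) ∧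
    Nonempty (MvPolynomial (Fin 2) K ≃ₐ[K]
      Algebra.adjoin K ({x K, z K} : Set (PreprojE K))) :=
  x_z_algebraically_independent_general K
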